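/- Let ϖ : Y → X be a Galois factor between irreducible SFTs with G = Gal(Y/X, ϖ), and let H ≤ G be a subgroup. Let Z = Y/H be the quotient of Y by the (free) action of H, q_H : Y → Z the projection, and β : Z → X the induced map with β ∘ q_H = ϖ. Then q_H is an unramified factor map with every fiber of cardinality |H|, q_H is a Galois factor, and Aut(Y/Z, q_H) = H. -/

import Mathlib

open Function Set

/-- The shift map on bi-infinite sequences. -/
def shiftMap (A : Type*) : (ℤ → A) → (ℤ → A) := fun x i => x (i + 1)

/-- A (two-sided) subshift over an alphabet `A`: a closed, shift-invariant subset of the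
full shift `A^ℤ` on which the shift is onto. -/
structure Subshift (A : Type*) [TopologicalSpace A] where
  carrier : Set (ℤ → A)
  isClosed' : IsClosed carrier
  shift_mem' : ∀ x ∈ carrier, shiftMap A x ∈ carrier
  shift_surjOn' : ∀ x ∈ carrier, ∃ y ∈ carrier, shiftMap A y = x

/-- The shift map restricted to a subshift. -/
def Subshift.σ {A : Type*} [TopologicalSpace A] (X : Subshift A) : X.carrier → X.carrier :=
  fun x => ⟨shiftMap A x.1, X.shift_mem' x.1 x.2⟩

/-- `X` is a shift of finite type: membership is determined by a finite-window rule. -/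
def Subshift.IsSFT {A : Type*} [TopologicalSpace A] (X : Subshift A) : Prop :=
  ∃ (n : ℕ) (W : Set (Fin n → A)),
    X.carrier = {x | ∀ i : ℤ, (fun k : Fin n => x (i + (k.val : ℤ))) ∈ W}

/-- Irreducibility (= topological transitivity) of a subshift. -/
def Subshift.Irreducible {A : Type*} [TopologicalSpace A] (X : Subshift A) : Prop :=
  ∀ U V : Set X.carrier, IsOpen U → IsOpen V → U.Nonempty → V.Nonempty →
    ∃ n : ℕ, (X.σ^[n] '' U ∩ V).Nonempty

/-- A factor map between subshifts: a continuous, shift-commuting surjection. -/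
structure IsFactorMap {A B : Type*} [TopologicalSpace A] [TopologicalSpace B]
    (Y : Subshift B) (X : Subshift A) (ϖ : Y.carrier → X.carrier) : Prop where
  continuous : Continuous ϖ
  commutes : ∀ y, ϖ (Y.σ y) = X.σ (ϖ y)
  surjective : Function.Surjective ϖ

/-- An unramified (constant-to-one) factor map of degree `d`. -/
def IsUnramified {A B : Type*} [TopologicalSpace A] [TopologicalSpace B]
    (Y : Subshift B) (X : Subshift A) (ϖ : Y.carrier → X.carrier) (d : ℕ) : Prop :=
  IsFactorMap Y X ϖ ∧ ∀ x : X.carrier, (ϖ ⁻¹' {x}).Finite ∧ (ϖ ⁻¹' {x}).ncard = d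

/-- The relative automorphism group `Aut(Y/X, ϖ)`: shift-commuting self-homeomorphisms of `Y`
over `X`. -/
def relAut {A B : Type*} [TopologicalSpace A] [TopologicalSpace B]
    (Y : Subshift B) (X : Subshift A) (ϖ : Y.carrier → X.carrier) :
    Subgroup (Equiv.Perm Y.carrier) where
  carrier := {φ | Continuous φ ∧ Continuous (φ⁻¹ : Equiv.Perm Y.carrier) ∧
    (∀ y, φ (Y.σ y) = Y.σ (φ y)) ∧ ∀ y, ϖ (φ y) = ϖ y}
  one_mem' := ⟨by simpa using continuous_id, by simpa using continuous_id,
    fun _ => by simp, fun _ => by simp⟩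
  mul_mem' := by
    rintro φ ψ ⟨hc, hci, hcomm, hrel⟩ ⟨hc', hci', hcomm', hrel'⟩
    refine ⟨?_, ?_, fun y => ?_, fun y => ?_⟩
    · simpa [Equiv.Perm.coe_mul] using hc.comp hc'
    · simpa [mul_inv_rev, Equiv.Perm.coe_mul] using hci'.comp hci
    · simp [Equiv.Perm.mul_apply, hcomm, hcomm']
    · simp [Equiv.Perm.mul_apply, hrel, hrel']
  inv_mem' := by
    rintro φ ⟨hc, hci, hcomm, hrel⟩
    refine ⟨hci, by simpa using hc, fun y => φ.injective ?_, fun y => ?_⟩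
    · simp [hcomm, fun z => (Equiv.apply_symm_apply φ z : φ (φ⁻¹ z) = z)]
    · conv_rhs => rw [← (Equiv.apply_symm_apply φ y : φ (φ⁻¹ y) = y)]
      exact (hrel _).symm

/-- A pointed Galois factor of degree `d` over a pointed subshift `(X, x₀)`. -/
def IsPointedGaloisFactor {A B : Type*} [TopologicalSpace A] [TopologicalSpace B]
    (Y : Subshift B) (y₀ : Y.carrier) (X : Subshift A) (x₀ : X.carrier)
    (ϖ : Y.carrier → X.carrier) (d : ℕ) : Prop :=
  Y.IsSFT ∧ Y.Irreducible ∧ ϖ y₀ = x₀ ∧ IsUnramified Y X ϖ d ∧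
    Nat.card (relAut Y X ϖ) = d

/-- The full shift on an alphabet `A`. -/
def fullShift (A : Type*) [TopologicalSpace A] : Subshift A where
  carrier := Set.univ
  isClosed' := isClosed_univ
  shift_mem' := fun _ _ => Set.mem_univ _
  shift_surjOn' := fun x _ => ⟨fun i => x (i - 1), Set.mem_univ _, by
    funext i; simp [shiftMap]⟩

/-!
The heart of the matter is that the Galois group `G = Aut(Y/X, ϖ)` acts freely. Two points of a
fiber of `ϖ` that agree on a right half-line must coincide: replacing their common future by the
future of a forward transitive point (legitimate in an SFT) gives two points `w, w'` of one fiber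
with `w` transitive; `G` acts freely at a transitive point, so its `d` images fill the fiber and
`w' = χ w`, and since `χ` commutes with the shift and `w, w'` are asymptotic, `χ` fixes every
accumulation point of the forward orbit of `w`, that is, every point. If now `ψ ∈ G` fixes `y`, give
`y` the past of a backward transitive point to get `a`; then `ψ a` and `a` agree on a right
half-line, so `ψ a = a`, and `ψ = 1` by the same rigidity. Given freeness, the fibers of `q` are
free `H`-orbits, and an automorphism over `Z` agrees with some `χ ∈ H` at one point, hence
everywhere.
-/

open Filter Topology

section TransitivePoint

variable {X : Type*} [TopologicalSpace X]

def IsTransitivePoint (f : X → X) (x : X) : Prop :=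
  ∀ U : Set X, IsOpen U → U.Nonempty → ∃ᶠ k in atTop, f^[k] x ∈ U

theorem IsTransitivePoint.iterate {f : X → X} {x : X} (hx : IsTransitivePoint f x) (m : ℕ) :
    IsTransitivePoint f (f^[m] x) := by
  intro U hU hne
  refine frequently_atTop.2 fun K => ?_
  obtain ⟨k, hk, hkU⟩ := frequently_atTop.1 (hx U hU hne) (K + m)
  refine ⟨k - m, by omega, ?_⟩
  rwa [← iterate_add_apply, Nat.sub_add_cancel (by omega)]

/-- By Baire category such points even form a dense `G_δ`. -/
theorem exists_isTransitivePoint [BaireSpace X] [SecondCountableTopology X] [Nonempty X]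
    {ι : Type*} [Countable ι] (f : ι → X → X) (hf : ∀ i, Continuous (f i))
    (htrans : ∀ i (U V : Set X), IsOpen U → IsOpen V → U.Nonempty → V.Nonempty →
      ∃ᶠ k in atTop, (U ∩ (f i)^[k] ⁻¹' V).Nonempty) :
    ∃ x, ∀ i, IsTransitivePoint (f i) x := by
  obtain ⟨b, hbc, hbne, hb⟩ := TopologicalSpace.exists_countable_basis X
  have : Countable b := hbc.to_subtype
  let O : ι × b × ℕ → Set X := fun ⟨i, V, K⟩ => ⋃ k ≥ K, (f i)^[k] ⁻¹' V
  have hOopen : ∀ j, IsOpen (O j) := fun ⟨i, V, K⟩ =>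
    isOpen_biUnion fun k _ => (hb.isOpen V.2).preimage ((hf i).iterate k)
  have hOdense : ∀ j, Dense (O j) := by
    rintro ⟨i, V, K⟩
    refine dense_iff_inter_open.2 fun U hU hUne => ?_
    have hVne : (V : Set X).Nonempty := nonempty_iff_ne_empty.2 fun h => hbne (h ▸ V.2)
    obtain ⟨k, hk, x, hxU, hxV⟩ :=
      frequently_atTop.1 (htrans i U V hU (hb.isOpen V.2) hUne hVne) K
    exact ⟨x, hxU, mem_biUnion hk hxV⟩
  obtain ⟨x, hx⟩ := (dense_iInter_of_isOpen hOopen hOdense).nonempty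
  refine ⟨x, fun i U hU ⟨p, hp⟩ => frequently_atTop.2 fun K => ?_⟩
  obtain ⟨V, hVb, -, hVU⟩ := hb.exists_subset_of_mem_open hp hU
  obtain ⟨k, hk, hkV⟩ := mem_iUnion₂.1 (mem_iInter.1 hx ⟨i, ⟨V, hVb⟩, K⟩)
  exact ⟨k, hk, hVU hkV⟩

end TransitivePoint

namespace Subshift

variable {A : Type*} [TopologicalSpace A]

section Shift

variable (S : Subshift A)

def σinv : S.carrier → S.carrier := fun x =>
  ⟨fun i => x.1 (i - 1), by
    obtain ⟨y, hy, hyx⟩ := S.shift_surjOn' x.1 x.2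
    simpa [← hyx, shiftMap] using hy⟩

@[simp] theorem coe_σ_apply (x : S.carrier) (i : ℤ) : (S.σ x).1 i = x.1 (i + 1) := rfl

@[simp] theorem coe_σinv_apply (x : S.carrier) (i : ℤ) : (S.σinv x).1 i = x.1 (i - 1) := rfl

theorem leftInverse_σinv : LeftInverse S.σinv S.σ := fun x => by ext; simp

theorem rightInverse_σinv : RightInverse S.σinv S.σ := fun x => by ext; simp

theorem coe_iterate_σ_apply (k : ℕ) (x : S.carrier) (i : ℤ) :
    (S.σ^[k] x).1 i = x.1 (i + k) := by
  induction k generalizing i with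
  | zero => simp
  | succ k ih => rw [iterate_succ_apply', coe_σ_apply, ih]; push_cast; ring_nf

theorem coe_iterate_σinv_apply (k : ℕ) (x : S.carrier) (i : ℤ) :
    (S.σinv^[k] x).1 i = x.1 (i - k) := by
  induction k generalizing i with
  | zero => simp
  | succ k ih => rw [iterate_succ_apply', coe_σinv_apply, ih]; push_cast; ring_nf

theorem continuous_σ : Continuous S.σ :=
  continuous_induced_rng.2 <| continuous_pi fun i =>
    (continuous_apply (i + 1)).comp continuous_subtype_val

theorem continuous_σinv : Continuous S.σinv :=
  continuous_induced_rng.2 <| continuous_pi fun i =>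
    (continuous_apply (i - 1)).comp continuous_subtype_val

theorem isOpen_image_iterate_σ {U : Set S.carrier} (hU : IsOpen U) (k : ℕ) :
    IsOpen (S.σ^[k] '' U) := by
  rw [image_eq_preimage_of_inverse (S.leftInverse_σinv.iterate k)
    (S.rightInverse_σinv.iterate k)]
  exact hU.preimage (S.continuous_σinv.iterate k)

end Shift

variable {S : Subshift A}

theorem Irreducible.frequently_image_inter (hS : S.Irreducible)
    {U V : Set S.carrier} (hU : IsOpen U) (hV : IsOpen V) (hUne : U.Nonempty)
    (hVne : V.Nonempty) : ∃ᶠ k in atTop, (S.σ^[k] '' U ∩ V).Nonempty := by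
  refine frequently_atTop.2 fun K => ?_
  obtain ⟨n, hn⟩ := hS _ V (S.isOpen_image_iterate_σ hU K) hV (hUne.image _) hVne
  refine ⟨n + K, le_add_self, ?_⟩
  rwa [iterate_add, image_comp]

instance [Finite A] : CompactSpace S.carrier :=
  isCompact_iff_compactSpace.1 S.isClosed'.isCompact

theorem Irreducible.exists_isTransitivePoint [DiscreteTopology A] [Finite A] [Nonempty S.carrier]
    (hS : S.Irreducible) :
    ∃ t, IsTransitivePoint S.σ t ∧ IsTransitivePoint S.σinv t := by
  refine (_root_.exists_isTransitivePoint (fun b : Bool => cond b S.σ S.σinv)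
    (fun b => by cases b; exacts [S.continuous_σinv, S.continuous_σ]) ?_).imp
    fun t ht => ⟨ht true, ht false⟩
  rintro (_ | _) U V hU hV hUne hVne
  · refine (hS.frequently_image_inter hV hU hVne hUne).mono fun k ⟨_, ⟨v, hv, rfl⟩, hkU⟩ => ?_
    exact ⟨_, hkU, by simpa [S.leftInverse_σinv.iterate k _] using hv⟩
  · refine (hS.frequently_image_inter hU hV hUne hVne).mono fun k ⟨_, ⟨u, hu, rfl⟩, hkV⟩ => ?_
    exact ⟨u, hu, by simpa using hkV⟩

def cylinder (p : S.carrier) (I : Finset ℤ) : Set S.carrier := {z | EqOn z.1 p.1 I}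

theorem mem_cylinder_self (p : S.carrier) (I : Finset ℤ) : p ∈ cylinder p I := fun _ _ => rfl

theorem isOpen_cylinder [DiscreteTopology A] (p : S.carrier) (I : Finset ℤ) :
    IsOpen (cylinder p I) := by
  have : cylinder p I = ⋂ j ∈ I, (fun z : S.carrier => z.1 j) ⁻¹' {p.1 j} := by
    ext z; simp [cylinder, EqOn]
  rw [this]
  exact isOpen_biInter_finset fun j _ =>
    (isOpen_discrete _).preimage ((continuous_apply j).comp continuous_subtype_val)

theorem exists_cylinder_subset {U : Set S.carrier} (hU : IsOpen U) {p : S.carrier} (hp : p ∈ U) :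
    ∃ I, cylinder p I ⊆ U := by
  obtain ⟨V, hV, rfl⟩ := isOpen_induced_iff.1 hU
  obtain ⟨I, u, hu, hIu⟩ := isOpen_pi_iff.1 hV p.1 hp
  exact ⟨I, fun z hz => hIu fun j hj => (hz hj).symm ▸ (hu j hj).2⟩

def Asymptotic (f : S.carrier → S.carrier) (x y : S.carrier) : Prop :=
  ∀ i : ℤ, ∀ᶠ k in atTop, (f^[k] x).1 i = (f^[k] y).1 i

theorem asymptotic_refl (f : S.carrier → S.carrier) (x : S.carrier) : Asymptotic f x x :=
  fun _ => Eventually.of_forall fun _ => rfl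

theorem asymptotic_σ_of_eqOn_Ici {x y : S.carrier} {c : ℤ} (h : EqOn x.1 y.1 (Ici c)) :
    Asymptotic S.σ x y := fun i =>
  (eventually_ge_atTop (c - i).toNat).mono fun k hk => by
    simp only [coe_iterate_σ_apply]
    exact h (show c ≤ i + k by omega)

theorem asymptotic_σinv_of_eqOn_Iio {x y : S.carrier} {c : ℤ} (h : EqOn x.1 y.1 (Iio c)) :
    Asymptotic S.σinv x y := fun i =>
  (eventually_ge_atTop (i - c + 1).toNat).mono fun k hk => by
    simp only [coe_iterate_σinv_apply]
    exact h (show i - k < c by omega)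

end Subshift

section

open Subshift

variable {A : Type*} [TopologicalSpace A] [DiscreteTopology A] {S : Subshift A}

theorem IsTransitivePoint.of_asymptotic {f : S.carrier → S.carrier}
    {x y : S.carrier} (hx : IsTransitivePoint f x) (hxy : Asymptotic f x y) :
    IsTransitivePoint f y := by
  rintro U hU ⟨p, hp⟩
  obtain ⟨I, hI⟩ := exists_cylinder_subset hU hp
  refine ((hx _ (isOpen_cylinder p I) ⟨p, mem_cylinder_self p I⟩).and_eventually
    ((eventually_all_finset I).2 fun i _ => hxy i)).mono fun k ⟨hk, hxy⟩ => hI fun j hj => ?_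
  exact (hxy j hj).symm.trans (hk hj)

theorem IsTransitivePoint.exists_iterate_eqOn {f : S.carrier → S.carrier}
    {t : S.carrier} (ht : IsTransitivePoint f t) (p : S.carrier) (I : Finset ℤ) :
    ∃ k, EqOn (f^[k] t).1 p.1 I :=
  (ht _ (isOpen_cylinder p I) ⟨p, mem_cylinder_self p I⟩).exists

theorem IsTransitivePoint.eq_id_of_asymptotic
    {f χ : S.carrier → S.carrier} {w : S.carrier} (hw : IsTransitivePoint f w)
    (hχ : Continuous χ) (hcomm : Function.Commute χ f) (hasymp : Asymptotic f w (χ w)) :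
    χ = id := by
  funext p
  refine Subtype.ext <| funext fun i => ?_
  let O := cylinder p {i} ∩ χ ⁻¹' cylinder (χ p) {i}
  have hO : IsOpen O := (isOpen_cylinder _ _).inter ((isOpen_cylinder _ _).preimage hχ)
  obtain ⟨k, ⟨hkp, hkχ⟩, hk⟩ :=
    ((hw O hO ⟨p, mem_cylinder_self _ _, mem_cylinder_self _ _⟩).and_eventually (hasymp i)).exists
  have hi : i ∈ (({i} : Finset ℤ) : Set ℤ) := Finset.mem_coe.2 (Finset.mem_singleton_self i)
  have hkp : (f^[k] w).1 i = p.1 i := hkp hi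
  have hkχ : (χ (f^[k] w)).1 i = (χ p).1 i := hkχ hi
  rw [← hkχ, hcomm.iterate_right k w, ← hk, hkp, id]

end

def HasRadius {A B : Type*} [TopologicalSpace A] [TopologicalSpace B] {S : Subshift B}
    {T : Subshift A} (f : S.carrier → T.carrier) (r : ℕ) : Prop :=
  ∀ (x x' : S.carrier) (i : ℤ), EqOn x.1 x'.1 (Icc (i - r) (i + r)) → (f x).1 i = (f x').1 i

section Radius

variable {A B : Type*} [TopologicalSpace A] [TopologicalSpace B] {S : Subshift B}
  {T : Subshift A} {f : S.carrier → T.carrier} {r : ℕ}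

/-- Curtis–Hedlund–Lyndon: by compactness the `0`-th coordinate of `f x` only depends on a
bounded window of `x`, and shift-equivariance moves this window to every coordinate. -/
theorem exists_hasRadius [DiscreteTopology A] [DiscreteTopology B] [Finite B]
    (hf : Continuous f) (hcomm : Semiconj f S.σ T.σ) : ∃ r, HasRadius f r := by
  let g : S.carrier → A := fun x => (f x).1 0
  have hg : Continuous g := (continuous_apply 0).comp (continuous_subtype_val.comp hf)
  let D : Set (S.carrier × S.carrier) := {p | g p.1 ≠ g p.2}
  let E : ℕ → Set (S.carrier × S.carrier) := fun r => {p | EqOn p.1.1 p.2.1 (Icc (-(r : ℤ)) r)}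
  have hD : IsClosed D := (isClosed_discrete {a : A × A | a.1 ≠ a.2}).preimage
    ((hg.comp continuous_fst).prodMk (hg.comp continuous_snd))
  have hE : ∀ r, IsClosed (E r) := fun r => by
    have : E r = ⋂ j ∈ Icc (-(r : ℤ)) r, {p | p.1.1 j = p.2.1 j} := by ext; simp [E, EqOn]
    rw [this]
    exact isClosed_biInter fun j _ =>
      isClosed_eq ((continuous_apply j).comp (continuous_subtype_val.comp continuous_fst))
        ((continuous_apply j).comp (continuous_subtype_val.comp continuous_snd))
  have hDE : D ∩ ⋂ r, E r = ∅ := by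
    refine eq_empty_iff_forall_notMem.2 ?_
    rintro ⟨x, x'⟩ ⟨hne, hall⟩
    apply hne
    have : x = x' := Subtype.ext <| funext fun j =>
      mem_iInter.1 hall j.natAbs ⟨by omega, by omega⟩
    rw [this]
  have hmono : Antitone E := fun r r' hrr' p hp =>
    hp.mono (Icc_subset_Icc (neg_le_neg (Nat.cast_le.2 hrr')) (Nat.cast_le.2 hrr'))
  obtain ⟨r, hr⟩ := hD.isCompact.elim_directed_family_closed E hE hDE hmono.directed_ge
  have h0 : ∀ x x' : S.carrier, EqOn x.1 x'.1 (Icc (-(r : ℤ)) r) → g x = g x' :=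
    fun x x' h => by_contra fun hne => eq_empty_iff_forall_notMem.1 hr (x, x') ⟨hne, h⟩
  refine ⟨r, fun x x' i h => ?_⟩
  rcases Int.eq_nat_or_neg i with ⟨n, rfl | rfl⟩
  · have := h0 (S.σ^[n] x) (S.σ^[n] x') fun j hj => by
      simp only [Subshift.coe_iterate_σ_apply]
      exact h ⟨by linarith [hj.1], by linarith [hj.2]⟩
    simpa only [g, hcomm.iterate_right n _, Subshift.coe_iterate_σ_apply, zero_add] using this
  · have hcomm' := hcomm.inverses_right S.rightInverse_σinv T.leftInverse_σinv
    have := h0 (S.σinv^[n] x) (S.σinv^[n] x') fun j hj => by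
      simp only [Subshift.coe_iterate_σinv_apply]
      exact h ⟨by linarith [hj.1], by linarith [hj.2]⟩
    simpa only [g, hcomm'.iterate_right n _, Subshift.coe_iterate_σinv_apply, zero_sub] using this

theorem HasRadius.eqOn_Ici (hf : HasRadius f r) {x x' : S.carrier} {c : ℤ}
    (h : EqOn x.1 x'.1 (Ici c)) : EqOn (f x).1 (f x').1 (Ici (c + r)) := fun i hi =>
  hf x x' i fun j hj => h (show c ≤ j by linarith [mem_Ici.1 hi, hj.1])

theorem HasRadius.eqOn_Iio (hf : HasRadius f r) {x x' : S.carrier} {c : ℤ}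
    (h : EqOn x.1 x'.1 (Iio c)) : EqOn (f x).1 (f x').1 (Iio (c - r)) := fun i hi =>
  hf x x' i fun j hj => h (show j < c by linarith [mem_Iio.1 hi, hj.2])

theorem HasRadius.map_eq_map (hf : HasRadius f r) {x x' w w' : S.carrier} (hx : f x = f x')
    {c : ℤ} (hw : EqOn w.1 x.1 (Iio c)) (hw' : EqOn w'.1 x'.1 (Iio c))
    (hww' : EqOn w.1 w'.1 (Ici (c - 2 * r))) : f w = f w' := by
  refine Subtype.ext <| funext fun i => ?_
  rcases lt_or_ge i (c - r) with hi | hi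
  · rw [hf.eqOn_Iio hw hi, hx, hf.eqOn_Iio hw' hi]
  · exact hf.eqOn_Ici hww' (show c - 2 * r + r ≤ i by linarith)

end Radius

theorem Subshift.IsSFT.exists_splice {A : Type*} [TopologicalSpace A] {S : Subshift A}
    (hS : S.IsSFT) : ∃ n : ℕ, ∀ (x y : S.carrier) (c : ℤ), EqOn x.1 y.1 (Ico (c - n) c) →
      (fun i => if i < c then x.1 i else y.1 i) ∈ S.carrier := by
  obtain ⟨n, W, hW⟩ := hS
  refine ⟨n, fun x y c hxy => ?_⟩
  have hx := hW.subset x.2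
  have hy := hW.subset y.2
  refine hW.symm.subset fun i => ?_
  by_cases hi : i + n ≤ c
  · convert hx i using 2 with k
    exact if_pos (by omega)
  · convert hy i using 2 with k
    split_ifs with h
    exacts [hxy ⟨by omega, h⟩, rfl]

theorem injective_apply_of_forall_eq_one {α : Type*} {H : Subgroup (Equiv.Perm α)} {y : α}
    (hfree : ∀ φ ∈ H, φ y = y → φ = 1) : Injective fun φ : H => (φ : Equiv.Perm α) y := by
  intro φ ψ h
  have h1 : (ψ : Equiv.Perm α)⁻¹ * φ = 1 :=
    hfree _ (H.mul_mem (H.inv_mem ψ.2) φ.2) (by simp [Equiv.Perm.mul_apply, h])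
  exact Subtype.ext (inv_mul_eq_one.1 h1).symm

section Galois

variable {A B : Type*} [TopologicalSpace A] [TopologicalSpace B] {X : Subshift A}
  {Y : Subshift B} {ϖ : Y.carrier → X.carrier} {d : ℕ}

theorem exists_mem_relAut_apply_eq (hϖ : IsUnramified Y X ϖ d)
    (hGal : Nat.card (relAut Y X ϖ) = d) {w : Y.carrier}
    (hfree : ∀ χ ∈ relAut Y X ϖ, χ w = w → χ = 1) {w' : Y.carrier} (h : ϖ w' = ϖ w) :
    ∃ χ ∈ relAut Y X ϖ, χ w = w' := by
  have hsub : range (fun χ : relAut Y X ϖ => (χ : Equiv.Perm Y.carrier) w) ⊆ ϖ ⁻¹' {ϖ w} := by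
    rintro _ ⟨χ, rfl⟩
    exact χ.2.2.2.2 w
  have horbit := eq_of_subset_of_ncard_le hsub (by
    rw [(hϖ.2 _).2, ← Nat.card_coe_set_eq,
      Nat.card_range_of_injective (injective_apply_of_forall_eq_one hfree), hGal]) (hϖ.2 _).1
  obtain ⟨χ, hχ⟩ : w' ∈ range fun χ : relAut Y X ϖ => (χ : Equiv.Perm Y.carrier) w :=
    horbit ▸ h
  exact ⟨χ, χ.2, hχ⟩

theorem relAut_eq_of_forall_eq_one {C : Type*} [TopologicalSpace C] {Z : Subshift C}
    (hfree : ∀ ψ ∈ relAut Y X ϖ, ∀ y, ψ y = y → ψ = 1) {H : Subgroup (Equiv.Perm Y.carrier)}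
    (hH : H ≤ relAut Y X ϖ) {q : Y.carrier → Z.carrier} {β : Z.carrier → X.carrier}
    (hβ : ∀ y, β (q y) = ϖ y) (horb : ∀ y y' : Y.carrier, q y = q y' ↔ ∃ φ ∈ H, φ y = y') :
    relAut Y Z q = H := by
  refine le_antisymm (fun φ hφ => ?_) fun φ hφ => ⟨(hH hφ).1, (hH hφ).2.1, (hH hφ).2.2.1,
    fun y => ((horb y (φ y)).2 ⟨φ, hφ, rfl⟩).symm⟩
  rcases isEmpty_or_nonempty Y.carrier with hY | ⟨⟨y⟩⟩
  · exact Subsingleton.elim φ 1 ▸ H.one_mem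
  have hφG : φ ∈ relAut Y X ϖ :=
    ⟨hφ.1, hφ.2.1, hφ.2.2.1, fun y' => by rw [← hβ, hφ.2.2.2 y', hβ]⟩
  obtain ⟨χ, hχ, hχy⟩ := (horb y (φ y)).1 (hφ.2.2.2 y).symm
  have h1 : χ⁻¹ * φ = 1 :=
    hfree _ ((relAut Y X ϖ).mul_mem ((relAut Y X ϖ).inv_mem (hH hχ)) hφG) y
      (by simp [Equiv.Perm.mul_apply, ← hχy])
  exact inv_mul_eq_one.1 h1 ▸ hχ

variable [DiscreteTopology A] [DiscreteTopology B] [Finite B]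

theorem eq_of_map_eq_of_eqOn_Ici (hY : Y.IsSFT) (hYirr : Y.Irreducible)
    (hϖ : IsUnramified Y X ϖ d) (hGal : Nat.card (relAut Y X ϖ) = d) {a a' : Y.carrier}
    (hfib : ϖ a = ϖ a') {c : ℤ} (h : EqOn a.1 a'.1 (Ici c)) : a = a' := by
  have : Nonempty Y.carrier := ⟨a⟩
  obtain ⟨t, ht, -⟩ := hYirr.exists_isTransitivePoint
  obtain ⟨n, hsplice⟩ := hY.exists_splice
  obtain ⟨r, hr⟩ := exists_hasRadius hϖ.1.continuous hϖ.1.commutes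
  set c' : ℤ := c + n + 2 * r with hc'
  obtain ⟨k, hk⟩ := ht.exists_iterate_eqOn a (Finset.Ico (c' - n) c')
  set z := Y.σ^[k] t
  have haz : EqOn a.1 z.1 (Ico (c' - n) c') := by simpa using hk.symm
  have ha'z : EqOn a'.1 z.1 (Ico (c' - n) c') := fun i hi =>
    (h (show c ≤ i by linarith [hi.1, r.cast_nonneg (α := ℤ)])).symm.trans (haz hi)
  let w : Y.carrier := ⟨_, hsplice a z c' haz⟩
  let w' : Y.carrier := ⟨_, hsplice a' z c' ha'z⟩
  have hwa : EqOn w.1 a.1 (Iio c') := fun i hi => if_pos hi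
  have hw'a' : EqOn w'.1 a'.1 (Iio c') := fun i hi => if_pos hi
  have hww' : EqOn w.1 w'.1 (Ici (c' - 2 * r)) := fun i hi => by
    show (if i < c' then a.1 i else z.1 i) = if i < c' then a'.1 i else z.1 i
    split_ifs
    exacts [h (show c ≤ i by linarith [mem_Ici.1 hi, n.cast_nonneg (α := ℤ)]), rfl]
  have hw : IsTransitivePoint Y.σ w := (ht.iterate k).of_asymptotic
    (Subshift.asymptotic_σ_of_eqOn_Ici (c := c') fun i hi => (if_neg (not_lt.2 hi)).symm)
  have hrigid : ∀ χ ∈ relAut Y X ϖ, Subshift.Asymptotic Y.σ w (χ w) → χ = 1 :=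
    fun χ hχ hasymp => Equiv.ext (congrFun (hw.eq_id_of_asymptotic hχ.1 hχ.2.2.1 hasymp))
  obtain ⟨χ, hχ, hχw⟩ := exists_mem_relAut_apply_eq hϖ hGal
    (fun χ hχ hfix => hrigid χ hχ (hfix ▸ Subshift.asymptotic_refl _ _))
    (hr.map_eq_map hfib hwa hw'a' hww').symm
  have hweq : w = w' := by
    rw [← hχw, hrigid χ hχ (hχw ▸ Subshift.asymptotic_σ_of_eqOn_Ici hww'), Equiv.Perm.one_apply]
  refine Subtype.ext <| funext fun i => ?_
  rcases lt_or_ge i c' with hi | hi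
  · rw [← hwa hi, ← hw'a' hi, hweq]
  · exact h (show c ≤ i by linarith [n.cast_nonneg (α := ℤ), r.cast_nonneg (α := ℤ)])

theorem eq_one_of_mem_relAut_of_apply_eq (hY : Y.IsSFT) (hYirr : Y.Irreducible)
    (hϖ : IsUnramified Y X ϖ d) (hGal : Nat.card (relAut Y X ϖ) = d)
    {ψ : Equiv.Perm Y.carrier} (hψ : ψ ∈ relAut Y X ϖ) {y : Y.carrier} (hy : ψ y = y) :
    ψ = 1 := by
  have : Nonempty Y.carrier := ⟨y⟩
  obtain ⟨t, -, ht⟩ := hYirr.exists_isTransitivePoint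
  obtain ⟨n, hsplice⟩ := hY.exists_splice
  obtain ⟨r, hr⟩ := exists_hasRadius hψ.1 hψ.2.2.1
  obtain ⟨k, hk⟩ := ht.exists_iterate_eqOn y (Finset.Ico (-n) 0)
  let a : Y.carrier := ⟨_, hsplice (Y.σinv^[k] t) y 0 (by simpa using hk)⟩
  have hay : EqOn a.1 y.1 (Ici 0) := fun i hi => if_neg (not_lt.2 hi)
  have ha : IsTransitivePoint Y.σinv a := (ht.iterate k).of_asymptotic
    (Subshift.asymptotic_σinv_of_eqOn_Iio (c := 0) fun i hi => (if_pos hi).symm)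
  have hψa : ψ a = a := eq_of_map_eq_of_eqOn_Ici hY hYirr hϖ hGal (hψ.2.2.2 a) (c := r)
    fun i hi => by
      rw [hr.eqOn_Ici hay (by simpa using hi), hy, hay (show (0 : ℤ) ≤ i by
        linarith [mem_Ici.1 hi, r.cast_nonneg (α := ℤ)])]
  have hcomm : Function.Commute ψ Y.σinv :=
    Semiconj.inverses_right hψ.2.2.1 Y.rightInverse_σinv Y.leftInverse_σinv
  refine Equiv.ext (congrFun (ha.eq_id_of_asymptotic hψ.1 hcomm ?_))
  rw [hψa]
  exact Subshift.asymptotic_refl _ _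

end Galois

theorem stmt_9_general {A B C : Type*} [TopologicalSpace A] [DiscreteTopology A]
    [TopologicalSpace B] [DiscreteTopology B] [Finite B]
    [TopologicalSpace C]
    (X : Subshift A) (Y : Subshift B) (Z : Subshift C)
    (hYsft : Y.IsSFT) (hYirr : Y.Irreducible)
    (ϖ : Y.carrier → X.carrier) (d : ℕ)
    (hϖ : IsUnramified Y X ϖ d) (hGal : Nat.card (relAut Y X ϖ) = d)
    (H : Subgroup (Equiv.Perm Y.carrier)) (hH : H ≤ relAut Y X ϖ)
    (q : Y.carrier → Z.carrier) (hq : IsFactorMap Y Z q)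
    (β : Z.carrier → X.carrier) (hβ : ∀ y, β (q y) = ϖ y)
    (horb : ∀ y y' : Y.carrier, q y = q y' ↔ ∃ φ ∈ H, φ y = y') :
    IsUnramified Y Z q (Nat.card H) ∧
      Nat.card (relAut Y Z q) = Nat.card H ∧
      relAut Y Z q = H := by
  have hfree : ∀ ψ ∈ relAut Y X ϖ, ∀ y, ψ y = y → ψ = 1 :=
    fun ψ hψ y => eq_one_of_mem_relAut_of_apply_eq hYsft hYirr hϖ hGal hψ
  have hAut := relAut_eq_of_forall_eq_one hfree hH hβ horb
  refine ⟨⟨hq, fun z => ?_⟩, by rw [hAut], hAut⟩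
  obtain ⟨y, rfl⟩ := hq.surjective z
  have hfib : q ⁻¹' {q y} = range fun φ : H => (φ : Equiv.Perm Y.carrier) y := by
    ext y'
    simpa [eq_comm] using horb y y'
  refine ⟨(hϖ.2 (ϖ y)).1.subset fun y' hy' => ?_, ?_⟩
  · rw [mem_preimage, mem_singleton_iff, ← hβ, ← hβ, hy']
  · rw [hfib, ← Nat.card_coe_set_eq, Nat.card_range_of_injective
      (injective_apply_of_forall_eq_one fun φ hφ => hfree φ (hH hφ) y)]

/-- Quotients by subgroups of the Galois group: if `ϖ : Y → X` is a Galois factor with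
group `G`, `H ≤ G` is a subgroup, and `q : Y → Z` is the quotient of `Y` by the free
action of `H` (i.e. the fibers of `q` are exactly the `H`-orbits), with `β : Z → X`
the induced map with `β ∘ q = ϖ`, then `q` is an unramified factor map whose fibers
all have cardinality `|H|`, `q` is a Galois factor, and `Aut(Y/Z, q) = H`. -/
theorem stmt_9 {A B C : Type*} [TopologicalSpace A] [DiscreteTopology A] [Finite A]
    [TopologicalSpace B] [DiscreteTopology B] [Finite B]
    [TopologicalSpace C] [DiscreteTopology C] [Finite C]
    (X : Subshift A) (Y : Subshift B) (Z : Subshift C)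
    (hXsft : X.IsSFT) (hXirr : X.Irreducible) (hYsft : Y.IsSFT) (hYirr : Y.Irreducible)
    (hZsft : Z.IsSFT) (hZirr : Z.Irreducible)
    (ϖ : Y.carrier → X.carrier) (d : ℕ)
    (hϖ : IsUnramified Y X ϖ d) (hGal : Nat.card (relAut Y X ϖ) = d)
    (H : Subgroup (Equiv.Perm Y.carrier)) (hH : H ≤ relAut Y X ϖ)
    (q : Y.carrier → Z.carrier) (hq : IsFactorMap Y Z q)
    (β : Z.carrier → X.carrier) (hβ : ∀ y, β (q y) = ϖ y)
    (horb : ∀ y y' : Y.carrier, q y = q y' ↔ ∃ φ ∈ H, φ y = y') :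
    IsUnramified Y Z q (Nat.card H) ∧
      Nat.card (relAut Y Z q) = Nat.card H ∧
      relAut Y Z q = H :=
  stmt_9_general X Y Z hYsft hYirr ϖ d hϖ hGal H hH q hq β hβ horb
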